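/- Let C \subseteq \mathbb{H}(n,q) be a \tau-design of cardinality M and h:[-1,1)\to(0,\infty). Suppose g(t) = \sum_{i=0}^n g_i Q_i^{(n,q)}(t) is a real polynomial with g(t) \ge h(t) for all inner products t \in T_n occurring between distinct points of C, and g_i \le 0 for all i \ge \tau+1. Then E(n,C;h) \le g_0 M - g(1). -/

import Mathlib

/-- Generalized binomial coefficient `C(x, j)` as a polynomial expression in a real `x`. -/
noncomputable def binomPoly (x : ℝ) (j : ℕ) : ℝ :=
  (∏ m ∈ Finset.range j, (x - (m : ℝ))) / (Nat.factorial j : ℝ)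

/-- Krawtchouk polynomial `K_i^{(n,q)}(z)`. -/
noncomputable def kraw (n q i : ℕ) (z : ℝ) : ℝ :=
  ∑ j ∈ Finset.range (i + 1),
    (-1 : ℝ) ^ j * ((q : ℝ) - 1) ^ (i - j) * binomPoly z j * binomPoly ((n : ℝ) - z) (i - j)

/-- Normalized Krawtchouk polynomial `Q_i^{(n,q)}(t)`. -/
noncomputable def Qnorm (n q i : ℕ) (t : ℝ) : ℝ :=
  kraw n q i ((n : ℝ) * (1 - t) / 2) / (((q : ℝ) - 1) ^ i * (n.choose i : ℝ))

/-- Hamming distance between two words of `ℍ(n,q)`. -/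
def hammingDist' {n q : ℕ} (x y : Fin n → Fin q) : ℕ :=
  (Finset.univ.filter fun i => x i ≠ y i).card

/-- "Inner product" `⟨x,y⟩ = 1 - 2 d(x,y)/n`. -/
noncomputable def innerProd {n q : ℕ} (x y : Fin n → Fin q) : ℝ :=
  1 - 2 * (hammingDist' x y : ℝ) / (n : ℝ)

/-! Expand `g` in the Krawtchouk basis and sum `g(⟨x,y⟩)` over all ordered pairs of `C`: the
`i = 0` term contributes `g₀ M²`, the terms `1 ≤ i ≤ τ` vanish by the design property, and the
terms `i > τ` are nonpositive because `gᵢ ≤ 0` and the kernel sums are nonnegative. The diagonal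
contributes `M g(1)`, and off the diagonal `g` dominates `h`. -/

lemma Qnorm_zero (n q : ℕ) (t : ℝ) : Qnorm n q 0 t = 1 := by
  simp [Qnorm, kraw, binomPoly]

lemma innerProd_self {n q : ℕ} (x : Fin n → Fin q) : innerProd x x = 1 := by
  simp [innerProd, hammingDist']

lemma Finset.sum_sum_eq_sum_sum_sdiff_singleton_add {α β : Type*} [DecidableEq α]
    [AddCommMonoid β] (C : Finset α) (f : α → α → β) :
    ∑ x ∈ C, ∑ y ∈ C, f x y = ∑ x ∈ C, ∑ y ∈ C \ {x}, f x y + ∑ x ∈ C, f x x := by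
  rw [← Finset.sum_add_distrib]
  exact Finset.sum_congr rfl fun x hx => Finset.sum_eq_sum_sdiff_singleton_add hx _

lemma sum_range_mul_le_mul_zero_of_design (n τ : ℕ) (c S : ℕ → ℝ)
    (hdes : ∀ i, 1 ≤ i → i ≤ τ → S i = 0) (hpd : ∀ i, τ + 1 ≤ i → i ≤ n → 0 ≤ S i)
    (hcoef : ∀ i, τ + 1 ≤ i → c i ≤ 0) :
    ∑ i ∈ Finset.range (n + 1), c i * S i ≤ c 0 * S 0 := by
  rw [Finset.sum_range_succ', add_le_iff_nonpos_left]
  refine Finset.sum_nonpos fun i hi => ?_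
  rcases le_or_gt (i + 1) τ with hle | hgt
  · simp [hdes (i + 1) (Nat.le_add_left 1 i) hle]
  · exact mul_nonpos_of_nonpos_of_nonneg (hcoef _ hgt)
      (hpd _ hgt (Finset.mem_range.mp hi))

lemma sum_sum_sum_mul_eq_sum_mul_sum_sum {α : Type*} (C : Finset α) (s : Finset ℕ)
    (c : ℕ → ℝ) (K : ℕ → α → α → ℝ) :
    ∑ x ∈ C, ∑ y ∈ C, ∑ i ∈ s, c i * K i x y = ∑ i ∈ s, c i * ∑ x ∈ C, ∑ y ∈ C, K i x y := by
  simp_rw [Finset.mul_sum]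
  calc ∑ x ∈ C, ∑ y ∈ C, ∑ i ∈ s, c i * K i x y
      = ∑ x ∈ C, ∑ i ∈ s, ∑ y ∈ C, c i * K i x y :=
        Finset.sum_congr rfl fun _ _ => Finset.sum_comm
    _ = ∑ i ∈ s, ∑ x ∈ C, ∑ y ∈ C, c i * K i x y := Finset.sum_comm

theorem stmt_5_general (n q τ : ℕ)
    (C : Finset (Fin n → Fin q)) (M : ℕ) (hM : C.card = M) (hM1 : 1 ≤ M)
    -- `C` is a `τ`-design:
    (hdes : ∀ i : ℕ, 1 ≤ i → i ≤ τ →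
      ∑ x ∈ C, ∑ y ∈ C, Qnorm n q i (innerProd x y) = 0)
    -- positive definiteness of the Krawtchouk kernels:
    (hpd : ∀ i : ℕ, τ + 1 ≤ i → i ≤ n →
      0 ≤ ∑ x ∈ C, ∑ y ∈ C, Qnorm n q i (innerProd x y))
    (h : ℝ → ℝ)
    (c : ℕ → ℝ) (g : ℝ → ℝ)
    (hg : ∀ t : ℝ, g t = ∑ i ∈ Finset.range (n + 1), c i * Qnorm n q i t)
    (hgh : ∀ x ∈ C, ∀ y ∈ C, x ≠ y → h (innerProd x y) ≤ g (innerProd x y))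
    (hcoef : ∀ i : ℕ, τ + 1 ≤ i → c i ≤ 0) :
    (1 / (M : ℝ)) * ∑ x ∈ C, ∑ y ∈ C \ {x}, h (innerProd x y) ≤
      c 0 * (M : ℝ) - g 1 := by
  have htotal : ∑ x ∈ C, ∑ y ∈ C, g (innerProd x y) ≤ c 0 * ((M : ℝ) * M) := by
    simp_rw [hg, sum_sum_sum_mul_eq_sum_mul_sum_sum]
    convert sum_range_mul_le_mul_zero_of_design n τ c _ hdes hpd hcoef using 2
    simp [Qnorm_zero, hM]
  have hoff : ∑ x ∈ C, ∑ y ∈ C \ {x}, h (innerProd x y)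
      ≤ ∑ x ∈ C, ∑ y ∈ C \ {x}, g (innerProd x y) := by
    refine Finset.sum_le_sum fun x hx => Finset.sum_le_sum fun y hy => ?_
    rw [Finset.mem_sdiff, Finset.mem_singleton] at hy
    exact hgh x hx y hy.1 (Ne.symm hy.2)
  rw [Finset.sum_sum_eq_sum_sum_sdiff_singleton_add] at htotal
  simp only [innerProd_self, Finset.sum_const, hM, nsmul_eq_mul] at htotal
  rw [one_div, inv_mul_le_iff₀ (by exact_mod_cast hM1)]
  linarith

theorem stmt_5 (n q τ : ℕ) (hn : 1 ≤ n) (hq : 2 ≤ q)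
    (C : Finset (Fin n → Fin q)) (M : ℕ) (hM : C.card = M) (hM1 : 1 ≤ M)
    -- `C` is a `τ`-design:
    (hdes : ∀ i : ℕ, 1 ≤ i → i ≤ τ →
      ∑ x ∈ C, ∑ y ∈ C, Qnorm n q i (innerProd x y) = 0)
    -- positive definiteness of the Krawtchouk kernels:
    (hpd : ∀ i : ℕ, τ + 1 ≤ i → i ≤ n →
      0 ≤ ∑ x ∈ C, ∑ y ∈ C, Qnorm n q i (innerProd x y))
    (h : ℝ → ℝ) (hpos : ∀ t ∈ Set.Ico (-1 : ℝ) 1, 0 < h t)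
    (c : ℕ → ℝ) (g : ℝ → ℝ)
    (hg : ∀ t : ℝ, g t = ∑ i ∈ Finset.range (n + 1), c i * Qnorm n q i t)
    (hgh : ∀ x ∈ C, ∀ y ∈ C, x ≠ y → h (innerProd x y) ≤ g (innerProd x y))
    (hcoef : ∀ i : ℕ, τ + 1 ≤ i → c i ≤ 0) :
    (1 / (M : ℝ)) * ∑ x ∈ C, ∑ y ∈ C \ {x}, h (innerProd x y) ≤
      c 0 * (M : ℝ) - g 1 :=
  stmt_5_general n q τ C M hM hM1 hdes hpd h c g hg hgh hcoef
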